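/- arXiv:1003.5349 — 4 statements merged into one kernel-verified Lean document; each statement's English description precedes it below -/
import Mathlib

section
/- In the Orthogonal Greedy Algorithm with an M-coherent dictionary, mM ≤ 1/20, and 1 ≤ n ≤ 2m−1, the quantities d_n = ⟨f_{n−1}, g_n⟩ satisfy |d_{n+1}| ≤ |d_n|(1 + 1.25M). -/
/-!
Write `f_{n-1} - f_n = ∑_{i ≤ n} c_i g_i`. Its inner product with `g_j`, `j ≤ n`, is `d_n` for
`j = n` and `0` otherwise, so the near-orthogonality of the `g_i` forces
`(1 - nM) ∑ |c_i| ≤ |d_n|`; as `nM ≤ 2mM ≤ 1/10`, `∑ |c_i| ≤ (10/9) |d_n|`. Then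
`⟨f_n, g_{n+1}⟩ = ⟨f_{n-1}, g_{n+1}⟩ - ∑ c_i ⟨g_i, g_{n+1}⟩`, where the first term is at most
`|d_n|` by the greedy choice of `g_n`, and the second at most `M ∑ |c_i| ≤ (10/9) M |d_n|`.
-/

open RealInnerProductSpace Finset

section Coherent

variable {H : Type*} [NormedAddCommGroup H] [InnerProductSpace ℝ H]
  {ι : Type*} {s : Finset ι} {v : ι → H} {c : ι → ℝ} {M : ℝ}

theorem abs_inner_sum_smul_le {w : H} (hw : ∀ i ∈ s, |⟪v i, w⟫| ≤ M) :
    |⟪∑ i ∈ s, c i • v i, w⟫| ≤ M * ∑ i ∈ s, |c i| := by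
  rw [sum_inner, mul_sum]
  refine (abs_sum_le_sum_abs _ _).trans (sum_le_sum fun i hi => ?_)
  rw [real_inner_smul_left, abs_mul, mul_comm]
  exact mul_le_mul_of_nonneg_right (hw i hi) (abs_nonneg _)

theorem abs_coeff_le_abs_inner_sum_smul_add [DecidableEq ι] {j : ι} (hj : j ∈ s)
    (hvj : ‖v j‖ = 1) (hcoh : ∀ i ∈ s, i ≠ j → |⟪v i, v j⟫| ≤ M) (hM : 0 ≤ M) :
    |c j| ≤ |⟪∑ i ∈ s, c i • v i, v j⟫| + M * ∑ i ∈ s, |c i| := by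
  have hsplit : ⟪∑ i ∈ s, c i • v i, v j⟫ = c j + ⟪∑ i ∈ s.erase j, c i • v i, v j⟫ := by
    rw [← add_sum_erase _ _ hj, inner_add_left, real_inner_smul_left,
      real_inner_self_eq_norm_sq, hvj, one_pow, mul_one]
  have hrest : |⟪∑ i ∈ s.erase j, c i • v i, v j⟫| ≤ M * ∑ i ∈ s, |c i| :=
    (abs_inner_sum_smul_le fun i hi => hcoh i (mem_of_mem_erase hi) (ne_of_mem_erase hi)).trans
      (mul_le_mul_of_nonneg_left
        (sum_le_sum_of_subset_of_nonneg (erase_subset _ _) fun _ _ _ => abs_nonneg _) hM)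
  calc |c j| = |⟪∑ i ∈ s, c i • v i, v j⟫ - ⟪∑ i ∈ s.erase j, c i • v i, v j⟫| := by
        rw [hsplit, add_sub_cancel_right]
    _ ≤ |⟪∑ i ∈ s, c i • v i, v j⟫| + |⟪∑ i ∈ s.erase j, c i • v i, v j⟫| := abs_sub _ _
    _ ≤ |⟪∑ i ∈ s, c i • v i, v j⟫| + M * ∑ i ∈ s, |c i| := by gcongr

/-- An `ℓ¹` form of diagonal dominance of the Gram matrix of an `M`-coherent family. -/
theorem one_sub_card_mul_sum_abs_le (hv : ∀ i ∈ s, ‖v i‖ = 1)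
    (hcoh : ∀ i ∈ s, ∀ j ∈ s, i ≠ j → |⟪v i, v j⟫| ≤ M) (hM : 0 ≤ M) :
    (1 - #s * M) * ∑ i ∈ s, |c i| ≤ ∑ j ∈ s, |⟪∑ i ∈ s, c i • v i, v j⟫| := by
  classical
  have := sum_le_sum fun j hj => abs_coeff_le_abs_inner_sum_smul_add (c := c) hj (hv j hj)
    (fun i hi hij => hcoh i hi j hj hij) hM
  rw [sum_add_distrib, sum_const, nsmul_eq_mul] at this
  linarith

theorem one_sub_card_mul_abs_inner_le_of_mem_span (hv : ∀ i ∈ s, ‖v i‖ = 1)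
    (hcoh : ∀ i ∈ s, ∀ j ∈ s, i ≠ j → |⟪v i, v j⟫| ≤ M) (hM : 0 ≤ M) {x w : H}
    (hx : x ∈ Submodule.span ℝ (v '' s)) {j₀ : ι} (hj₀ : j₀ ∈ s)
    (horth : ∀ j ∈ s, j ≠ j₀ → ⟪x, v j⟫ = 0) (hw : ∀ i ∈ s, |⟪v i, w⟫| ≤ M) :
    (1 - #s * M) * |⟪x, w⟫| ≤ M * |⟪x, v j₀⟫| := by
  obtain ⟨c, rfl⟩ := (Submodule.mem_span_image_finset_iff_exists_fun' ℝ).mp hx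
  have hsum := one_sub_card_mul_sum_abs_le (c := c) hv hcoh hM
  rw [sum_eq_single_of_mem (f := fun j => |⟪∑ i ∈ s, c i • v i, v j⟫|) j₀ hj₀
    fun j hj hjj₀ => by rw [horth j hj hjj₀, abs_zero]] at hsum
  have hwx := abs_inner_sum_smul_le (c := c) hw
  rcases le_or_gt 0 (1 - #s * M) with hpos | hneg
  · calc (1 - #s * M) * |⟪∑ i ∈ s, c i • v i, w⟫|
        ≤ (1 - #s * M) * (M * ∑ i ∈ s, |c i|) := mul_le_mul_of_nonneg_left hwx hpos
      _ = M * ((1 - #s * M) * ∑ i ∈ s, |c i|) := by ring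
      _ ≤ M * |⟪∑ i ∈ s, c i • v i, v j₀⟫| := mul_le_mul_of_nonneg_left hsum hM
  · nlinarith [abs_nonneg ⟪∑ i ∈ s, c i • v i, w⟫, abs_nonneg ⟪∑ i ∈ s, c i • v i, v j₀⟫]

end Coherent

theorem oga_dn_succ_bound_general {H : Type*} [NormedAddCommGroup H] [InnerProductSpace ℝ H]
    (D : Set H) (M : ℝ) (m : ℕ)
    (hDnorm : ∀ φ ∈ D, ‖φ‖ = 1)
    (hcoh : ∀ φ ∈ D, ∀ ψ ∈ D, φ ≠ ψ → |⟪φ, ψ⟫| ≤ M)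
    (hmM : (m : ℝ) * M ≤ 1 / 20)
    (n : ℕ) (hn : 1 ≤ n) (hn2m : n + 1 ≤ 2 * m)
    (fres : ℕ → H) (g : ℕ → H)
    (hgD : ∀ k, 1 ≤ k → k ≤ n + 1 → g k ∈ D)
    (hgdist : ∀ i j, 1 ≤ i → i ≤ n + 1 → 1 ≤ j → j ≤ n + 1 → g i = g j → i = j)
    (hgreedy : ∀ k, k < n + 1 → ∀ φ ∈ D, |⟪fres k, φ⟫| ≤ |⟪fres k, g (k + 1)⟫|)
    (hres_span : ∀ k, k ≤ n + 1 → fres 0 - fres k ∈ Submodule.span ℝ (g '' Set.Icc 1 k))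
    (hres_orth : ∀ k, k ≤ n + 1 → ∀ i, 1 ≤ i → i ≤ k → ⟪fres k, g i⟫ = 0) :
    |⟪fres n, g (n + 1)⟫| ≤ |⟪fres (n - 1), g n⟫| * (1 + 1.25 * M) := by
  have hg : ∀ k ∈ Icc 1 (n + 1), g k ∈ D := fun k hk => hgD k (mem_Icc.mp hk).1 (mem_Icc.mp hk).2
  have hgM : ∀ i ∈ Icc 1 (n + 1), ∀ j ∈ Icc 1 (n + 1), i ≠ j → |⟪g i, g j⟫| ≤ M :=
    fun i hi j hj hij => hcoh _ (hg i hi) _ (hg j hj) fun h =>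
      hij (hgdist i j (mem_Icc.mp hi).1 (mem_Icc.mp hi).2 (mem_Icc.mp hj).1 (mem_Icc.mp hj).2 h)
  have hsub : Icc 1 n ⊆ Icc 1 (n + 1) := Icc_subset_Icc_right (by omega)
  have hlast : n + 1 ∈ Icc 1 (n + 1) := mem_Icc.mpr ⟨by omega, le_rfl⟩
  have hM : 0 ≤ M := (abs_nonneg _).trans
    (hgM 1 (mem_Icc.mpr ⟨le_rfl, by omega⟩) 2 (mem_Icc.mpr ⟨by omega, by omega⟩) (by omega))
  have hdiff : fres (n - 1) - fres n ∈ Submodule.span ℝ (g '' ↑(Icc 1 n)) := by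
    rw [coe_Icc, ← sub_sub_sub_cancel_left _ _ (fres 0)]
    exact Submodule.sub_mem _ (hres_span n (by omega)) <|
      Submodule.span_mono (Set.image_mono (Set.Icc_subset_Icc_right (by omega)))
        (hres_span (n - 1) (by omega))
  have horth : ∀ j ∈ Icc 1 n, j ≠ n → ⟪fres (n - 1) - fres n, g j⟫ = 0 := by
    intro j hj hjn
    obtain ⟨hj1, hjn'⟩ := mem_Icc.mp hj
    rw [inner_sub_left, hres_orth n (by omega) j hj1 hjn',
      hres_orth (n - 1) (by omega) j hj1 (by omega), sub_zero]
  have hdn : ⟪fres (n - 1) - fres n, g n⟫ = ⟪fres (n - 1), g n⟫ := by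
    rw [inner_sub_left, hres_orth n (by omega) n hn le_rfl, sub_zero]
  have hfar := one_sub_card_mul_abs_inner_le_of_mem_span (fun i hi => hDnorm _ (hg i (hsub hi)))
    (fun i hi j hj => hgM i (hsub hi) j (hsub hj)) hM hdiff (mem_Icc.mpr ⟨hn, le_rfl⟩) horth
    (w := g (n + 1)) fun i hi => hgM i (hsub hi) (n + 1) hlast
      ((mem_Icc.mp hi).2.trans_lt n.lt_succ_self).ne
  rw [Nat.card_Icc, add_tsub_cancel_right, hdn] at hfar
  have hnear : |⟪fres (n - 1), g (n + 1)⟫| ≤ |⟪fres (n - 1), g n⟫| := by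
    simpa [Nat.sub_add_cancel hn] using hgreedy (n - 1) (by omega) _ (hg _ hlast)
  have hnM : (n : ℝ) * M ≤ 1 / 10 := by
    have : (n : ℝ) + 1 ≤ 2 * m := by exact_mod_cast hn2m
    nlinarith
  calc |⟪fres n, g (n + 1)⟫|
      = |⟪fres (n - 1), g (n + 1)⟫ - ⟪fres (n - 1) - fres n, g (n + 1)⟫| := by
        rw [inner_sub_left, sub_sub_cancel]
    _ ≤ |⟪fres (n - 1), g (n + 1)⟫| + |⟪fres (n - 1) - fres n, g (n + 1)⟫| := abs_sub _ _
    _ ≤ |⟪fres (n - 1), g n⟫| * (1 + 1.25 * M) := by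
        nlinarith [abs_nonneg ⟪fres (n - 1), g n⟫, abs_nonneg ⟪fres (n - 1) - fres n, g (n + 1)⟫]

/-- In OGA with an `M`-coherent dictionary, `mM ≤ 1/20` and `1 ≤ n ≤ 2m - 1`,
one has `|d_{n+1}| ≤ |d_n| (1 + 1.25 M)` where `d_k = ⟨f_{k-1}, g_k⟩`. -/
theorem oga_dn_succ_bound {H : Type*} [NormedAddCommGroup H] [InnerProductSpace ℝ H]
    [CompleteSpace H]
    (D : Set H) (M : ℝ) (m : ℕ)
    (hDnorm : ∀ φ ∈ D, ‖φ‖ = 1)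
    (hcoh : ∀ φ ∈ D, ∀ ψ ∈ D, φ ≠ ψ → |⟪φ, ψ⟫| ≤ M)
    (hm : 1 ≤ m) (hmM : (m : ℝ) * M ≤ 1 / 20)
    (n : ℕ) (hn : 1 ≤ n) (hn2m : n + 1 ≤ 2 * m)
    (fres : ℕ → H) (g : ℕ → H)
    (hgD : ∀ k, 1 ≤ k → k ≤ n + 1 → g k ∈ D)
    (hgdist : ∀ i j, 1 ≤ i → i ≤ n + 1 → 1 ≤ j → j ≤ n + 1 → g i = g j → i = j)
    (hgreedy : ∀ k, k < n + 1 → ∀ φ ∈ D, |⟪fres k, φ⟫| ≤ |⟪fres k, g (k + 1)⟫|)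
    (hres_span : ∀ k, k ≤ n + 1 → fres 0 - fres k ∈ Submodule.span ℝ (g '' Set.Icc 1 k))
    (hres_orth : ∀ k, k ≤ n + 1 → ∀ i, 1 ≤ i → i ≤ k → ⟪fres k, g i⟫ = 0) :
    |⟪fres n, g (n + 1)⟫| ≤ |⟪fres (n - 1), g n⟫| * (1 + 1.25 * M) :=
  oga_dn_succ_bound_general D M m hDnorm hcoh hmM n hn hn2m fres g hgD hgdist hgreedy hres_span
    hres_orth
end

section
/- Let D be an M-coherent dictionary, ψ_1,…,ψ_m distinct elements of D, L = span(ψ_1,…,ψ_m), and g, g' ∈ D with g, g' ∉ {ψ_1,…,ψ_m} and g ≠ g'. If mM ≤ 1/20, then |⟨P_L^⊥(g), g'⟩| ≤ 1.1 M, where P_L^⊥ denotes orthogonal projection onto the orthogonal complement of L. -/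
open RealInnerProductSpace Finset

/-! The projection of `g` onto `L` is `∑ cⱼ ψⱼ`, and the normal equations `⟪∑ cⱼ ψⱼ, ψₖ⟫ = ⟪g, ψₖ⟫`
force the coefficients of a nearly orthonormal family to be small: by a Gershgorin-type estimate,
`(1 - mM) ∑ |cⱼ| ≤ mM`, so `∑ |cⱼ| ≤ 1/19`. Hence
`|⟪g - ∑ cⱼ ψⱼ, g'⟫| ≤ M + M ∑ |cⱼ| ≤ (20/19) M`. -/

section CoherentFamily

variable {E ι : Type*} [NormedAddCommGroup E] [InnerProductSpace ℝ E] {ψ : ι → E} {M : ℝ}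

lemma abs_inner_sum_smul_le_s9 (s : Finset ι) (c : ι → ℝ) {v : E}
    (hv : ∀ j ∈ s, |⟪ψ j, v⟫| ≤ M) :
    |⟪∑ j ∈ s, c j • ψ j, v⟫| ≤ M * ∑ j ∈ s, |c j| := by
  simp only [sum_inner, real_inner_smul_left, mul_sum]
  refine (abs_sum_le_sum_abs _ _).trans (sum_le_sum fun j hj => ?_)
  rw [abs_mul, mul_comm M]
  exact mul_le_mul_of_nonneg_left (hv j hj) (abs_nonneg _)

variable [Fintype ι] [DecidableEq ι]

lemma abs_coeff_le_of_coherent (hψ : ∀ j, ‖ψ j‖ = 1) (hM : 0 ≤ M)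
    (hcoh : ∀ j k, j ≠ k → |⟪ψ j, ψ k⟫| ≤ M) (c : ι → ℝ) (k : ι) :
    |c k| ≤ |⟪∑ j, c j • ψ j, ψ k⟫| + M * ∑ j, |c j| := by
  set rest := ∑ j ∈ univ.erase k, c j • ψ j
  have hsplit : ⟪∑ j, c j • ψ j, ψ k⟫ = c k + ⟪rest, ψ k⟫ := by
    rw [← add_sum_erase _ _ (mem_univ k), inner_add_left, real_inner_smul_left,
      real_inner_self_eq_norm_sq, hψ, one_pow, mul_one]
  have hrest : |⟪rest, ψ k⟫| ≤ M * ∑ j, |c j| :=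
    (abs_inner_sum_smul_le_s9 _ c fun j hj => hcoh j k (ne_of_mem_erase hj)).trans <|
      mul_le_mul_of_nonneg_left
        (sum_le_sum_of_subset_of_nonneg (erase_subset _ _) fun j _ _ => abs_nonneg _) hM
  calc |c k| = |⟪∑ j, c j • ψ j, ψ k⟫ - ⟪rest, ψ k⟫| := by rw [hsplit, add_sub_cancel_right]
    _ ≤ |⟪∑ j, c j • ψ j, ψ k⟫| + |⟪rest, ψ k⟫| := abs_sub _ _
    _ ≤ _ := by gcongr

lemma sum_abs_coeff_le_of_coherent (hψ : ∀ j, ‖ψ j‖ = 1) (hM : 0 ≤ M)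
    (hcoh : ∀ j k, j ≠ k → |⟪ψ j, ψ k⟫| ≤ M) (c : ι → ℝ) {B : ℝ}
    (hB : ∀ k, |⟪∑ j, c j • ψ j, ψ k⟫| ≤ B) :
    (1 - Fintype.card ι * M) * ∑ j, |c j| ≤ Fintype.card ι * B := by
  have h : ∑ k, |c k| ≤ ∑ _k : ι, (B + M * ∑ j, |c j|) :=
    sum_le_sum fun k _ => (abs_coeff_le_of_coherent hψ hM hcoh c k).trans (by gcongr; exact hB k)
  rw [sum_const, card_univ, nsmul_eq_mul] at h
  linarith

end CoherentFamily

theorem inner_proj_orthogonal_le_general {H : Type*} [NormedAddCommGroup H]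
    [InnerProductSpace ℝ H]
    (D : Set H) (M : ℝ) (m : ℕ)
    (hDnorm : ∀ φ ∈ D, ‖φ‖ = 1)
    (hcoh : ∀ φ ∈ D, ∀ ψ ∈ D, φ ≠ ψ → |⟪φ, ψ⟫| ≤ M)
    (hmM : (m : ℝ) * M ≤ 1 / 20)
    (ψ : Fin m → H) (hψD : ∀ j, ψ j ∈ D) (hψinj : Function.Injective ψ)
    (g g' : H) (hgD : g ∈ D) (hg'D : g' ∈ D) (hgg' : g ≠ g')
    (hg : g ∉ Set.range ψ) (hg' : g' ∉ Set.range ψ) :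
    letI : FiniteDimensional ℝ (Submodule.span ℝ (Set.range ψ)) :=
      FiniteDimensional.span_of_finite ℝ (Set.finite_range ψ)
    |⟪g - (Submodule.orthogonalProjectionOnto (Submodule.span ℝ (Set.range ψ)) g : H), g'⟫| ≤ 1.1 * M := by
  let _ : FiniteDimensional ℝ (Submodule.span ℝ (Set.range ψ)) :=
    FiniteDimensional.span_of_finite ℝ (Set.finite_range ψ)
  set L := Submodule.span ℝ (Set.range ψ)
  have hM : 0 ≤ M := (abs_nonneg _).trans (hcoh g hgD g' hg'D hgg')
  obtain ⟨c, hc⟩ := (Submodule.mem_span_range_iff_exists_fun ℝ).1 (L.orthogonalProjectionOnto g).2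
  have hnormal : ∀ k, |⟪∑ j, c j • ψ j, ψ k⟫| ≤ M := fun k => by
    have h := L.inner_orthogonalProjectionOnto_eq_of_mem_right ⟨ψ k, Submodule.subset_span ⟨k, rfl⟩⟩ g
    rw [Submodule.coe_inner] at h
    rw [hc, h]
    exact hcoh g hgD _ (hψD k) fun h => hg ⟨k, h.symm⟩
  have hS := sum_abs_coeff_le_of_coherent (fun j => hDnorm _ (hψD j)) hM
    (fun j k hjk => hcoh _ (hψD j) _ (hψD k) (hψinj.ne hjk)) c hnormal
  rw [Fintype.card_fin] at hS
  have hS' : ∑ j, |c j| ≤ 1 / 19 := by nlinarith [sum_nonneg fun j (_ : j ∈ univ) => abs_nonneg (c j)]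
  have hg'c : |⟪∑ j, c j • ψ j, g'⟫| ≤ M * ∑ j, |c j| :=
    abs_inner_sum_smul_le_s9 _ c fun j _ => hcoh _ (hψD j) _ hg'D fun h => hg' ⟨j, h⟩
  rw [← hc]
  calc |⟪g - ∑ j, c j • ψ j, g'⟫| ≤ |⟪g, g'⟫| + |⟪∑ j, c j • ψ j, g'⟫| := by
        rw [inner_sub_left]; exact abs_sub _ _
    _ ≤ M + M * ∑ j, |c j| := add_le_add (hcoh g hgD g' hg'D hgg') hg'c
    _ ≤ 1.1 * M := by nlinarith

/-- For distinct `ψ₁,…,ψₘ` from an `M`-coherent dictionary with `mM ≤ 1/20`,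
`L = span(ψ₁,…,ψₘ)`, and distinct `g, g' ∈ D` not among the `ψⱼ`,
`|⟨P_L^⊥ g, g'⟩| ≤ 1.1 M` (here `P_L^⊥ g = g - P_L g`). -/
theorem inner_proj_orthogonal_le {H : Type*} [NormedAddCommGroup H]
    [InnerProductSpace ℝ H] [CompleteSpace H]
    (D : Set H) (M : ℝ) (m : ℕ)
    (hDnorm : ∀ φ ∈ D, ‖φ‖ = 1)
    (hcoh : ∀ φ ∈ D, ∀ ψ ∈ D, φ ≠ ψ → |⟪φ, ψ⟫| ≤ M)
    (hm : 1 ≤ m) (hmM : (m : ℝ) * M ≤ 1 / 20)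
    (ψ : Fin m → H) (hψD : ∀ j, ψ j ∈ D) (hψinj : Function.Injective ψ)
    (g g' : H) (hgD : g ∈ D) (hg'D : g' ∈ D) (hgg' : g ≠ g')
    (hg : g ∉ Set.range ψ) (hg' : g' ∉ Set.range ψ) :
    letI : FiniteDimensional ℝ (Submodule.span ℝ (Set.range ψ)) :=
      FiniteDimensional.span_of_finite ℝ (Set.finite_range ψ)
    |⟪g - (Submodule.orthogonalProjectionOnto (Submodule.span ℝ (Set.range ψ)) g : H), g'⟫| ≤ 1.1 * M :=
  inner_proj_orthogonal_le_general D M m hDnorm hcoh hmM ψ hψD hψinj g g' hgD hg'D hgg' hg hg'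
end

section
/- (Main theorem) Let D be an M-coherent dictionary in a Hilbert space H and let f ∈ H. Then for every integer m with 1 ≤ m ≤ 1/(20M), the residual of the Orthogonal Greedy Algorithm after 2m steps satisfies ‖f − G^{OGA}_{2m}(f, D)‖ ≤ 3 σ_m(f, D), where σ_m(f, D) is the best m-term approximation error of f with respect to D. -/
/-!
Write `f = ∑_{ψ ∈ T} a_ψ ψ + u` with `#T ≤ m` and suppose `‖f_{2m}‖ > 3‖u‖`; then `‖f_n‖ > 3‖u‖`
for all `n ≤ 2m`. As `f_n` is orthogonal to the selected atoms, `‖f_n‖² = ⟪f_n, f⟫` is at most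
`‖u‖ ‖f_n‖` plus the greedy inner product `|⟪f_n, g_{n+1}⟫|` times `∑ |a_ψ|` over the atoms of `T`
not yet selected. Any `3m` atoms have a Gram matrix within `3mM ≤ 3/20` of the identity, and with
this the inequality becomes `√m |⟪u, g_{n+1}⟫| > ‖u‖` at every step that selects an atom outside
`T`. There are at least `m + #(T \ selected)` such steps, whereas the Bessel inequality of a
coherent family bounds `∑ ⟪u, g_{n+1}⟫²` over them by `(11/10) ‖u‖²`. Hence fewer than `m/10` atoms
of `T` are never selected, and at the least correlated of those steps every unselected coefficient
satisfies `|a_ψ| ≤ 2‖u‖/√m + |⟪u, ψ⟫|`. Finally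
`‖f_{2m}‖ ≤ ‖u + ∑_{unselected} a_ψ ψ‖ ≤ (11/4) ‖u‖`, a contradiction.
-/

open RealInnerProductSpace Finset

theorem sq_sum_abs_le_card_mul_sum_sq {ι : Type*} (S : Finset ι) (b : ι → ℝ) :
    (∑ i ∈ S, |b i|) ^ 2 ≤ #S * ∑ i ∈ S, b i ^ 2 := by
  simpa only [sq_abs] using sq_sum_le_card_mul_sum_sq (s := S) (f := fun i => |b i|)

-- `23/25` is a rational lower bound for `√(17/20)`.
theorem mul_sub_le_of_le_mul_add {x δ L G E W s : ℝ} (hx : 0 ≤ x) (hδ : 0 ≤ δ) (hs : 0 ≤ s)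
    (hL : 0 ≤ L) (hW : 0 ≤ W) (hxG : x ^ 2 ≤ L * G + δ * x)
    (hL2 : 17 * L ^ 2 ≤ 20 * s ^ 2 * (x + δ) ^ 2) (hG : G ≤ E + W)
    (hE : s * E ≤ 47 / 500 * (x + δ)) :
    23 / 25 * (x * (x - δ)) ≤ (s * W + 47 / 500 * (x + δ)) * (x + δ) := by
  have hP : x * (x - δ) ≤ L * (E + W) := by nlinarith
  rcases le_or_gt (x * (x - δ)) 0 with hP0 | hP0
  · nlinarith [mul_nonneg hs hW]
  have hEW : 0 < E + W := by
    by_contra! h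
    nlinarith [mul_nonneg hL (neg_nonneg.2 h)]
  have hsq : (23 / 25 * (x * (x - δ))) ^ 2 ≤ (s * (x + δ) * (E + W)) ^ 2 := by
    calc (23 / 25 * (x * (x - δ))) ^ 2 ≤ 17 / 20 * (L * (E + W)) ^ 2 := by
          nlinarith [pow_le_pow_left₀ hP0.le hP 2]
      _ = 17 * L ^ 2 / 20 * (E + W) ^ 2 := by ring
      _ ≤ 20 * s ^ 2 * (x + δ) ^ 2 / 20 * (E + W) ^ 2 := by gcongr
      _ = (s * (x + δ) * (E + W)) ^ 2 := by ring
  have hroot := le_of_pow_le_pow_left₀ two_ne_zero (by positivity) hsq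
  nlinarith

theorem card_lt_and_exists_mul_le_of_sum_le {ι : Type*} {s : Finset ι} {W : ι → ℝ} {m ρ : ℕ}
    {c : ℝ} (hm : 1 ≤ m) (hc : 0 ≤ c) (hcard : m + ρ ≤ #s) (hlow : ∀ n ∈ s, c < m * W n)
    (hsum : ∑ n ∈ s, W n ≤ 11 / 10 * c) : 10 * ρ < m ∧ ∃ k ∈ s, m * W k ≤ 11 / 10 * c := by
  have hne : s.Nonempty := card_pos.1 (by omega)
  have hmass : #s * c < m * (11 / 10 * c) := by
    calc #s * c = ∑ n ∈ s, c := by rw [sum_const, nsmul_eq_mul]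
      _ < ∑ n ∈ s, m * W n := sum_lt_sum_of_nonempty hne hlow
      _ ≤ m * (11 / 10 * c) := by rw [← mul_sum]; gcongr
  have hcard' : (m : ℝ) + ρ ≤ #s := by exact_mod_cast hcard
  obtain ⟨k, hk, hmin⟩ := exists_min_image s W hne
  have hWk : #s * W k ≤ ∑ n ∈ s, W n := by
    simpa only [nsmul_eq_mul] using card_nsmul_le_sum s W (W k) hmin
  have hWk0 : 0 ≤ W k := by
    have := hlow k hk
    have : (0 : ℝ) < m := by exact_mod_cast hm
    nlinarith
  refine ⟨?_, k, hk, by nlinarith⟩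
  have : (10 * ρ : ℝ) < m := by nlinarith
  exact_mod_cast this

section

variable {H : Type*} [NormedAddCommGroup H] [InnerProductSpace ℝ H]

theorem exists_finset_sum_smul_eq [DecidableEq H] {ι : Type*} [Fintype ι] {D : Set H}
    (c : ι → ℝ) (φ : ι → H) (hφ : ∀ i, φ i ∈ D) :
    ∃ T : Finset H, ↑T ⊆ D ∧ #T ≤ Fintype.card ι ∧
      ∃ a : H → ℝ, ∑ i, c i • φ i = ∑ ψ ∈ T, a ψ • ψ := by
  refine ⟨univ.image φ, by simpa [Set.subset_def] using hφ, card_image_le,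
    fun ψ => ∑ i with φ i = ψ, c i, ?_⟩
  rw [sum_image' (fun i => c i • φ i)]
  intro i _
  rw [sum_smul]
  exact sum_congr rfl fun j hj => by rw [(mem_filter.1 hj).2]

theorem sum_smul_sub_sum_smul_eq_sum_union [DecidableEq H] (T Γ : Finset H) (a p : H → ℝ) :
    ∑ ψ ∈ T, a ψ • ψ - ∑ ψ ∈ Γ, p ψ • ψ
      = ∑ ψ ∈ T ∪ Γ, ((if ψ ∈ T then a ψ else 0) - if ψ ∈ Γ then p ψ else 0) • ψ := by
  simp only [sub_smul, ite_smul, zero_smul, sum_sub_distrib, sum_ite_mem, union_inter_cancel_left,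
    union_inter_cancel_right]

structure IsCoherentDictionary (D : Set H) (M : ℝ) : Prop where
  norm_eq_one : ∀ φ ∈ D, ‖φ‖ = 1
  abs_inner_le : ∀ φ ∈ D, ∀ ψ ∈ D, φ ≠ ψ → |⟪φ, ψ⟫| ≤ M

namespace IsCoherentDictionary

variable {D : Set H} {M : ℝ}

theorem mono (hD : IsCoherentDictionary D M) {M' : ℝ} (h : M ≤ M') : IsCoherentDictionary D M' :=
  ⟨hD.norm_eq_one, fun φ hφ ψ hψ hne => (hD.abs_inner_le φ hφ ψ hψ hne).trans h⟩

theorem abs_inner_sub_ite_le [DecidableEq H] (hD : IsCoherentDictionary D M) (hM : 0 ≤ M) {φ ψ : H}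
    (hφ : φ ∈ D) (hψ : ψ ∈ D) : |⟪φ, ψ⟫ - if φ = ψ then 1 else 0| ≤ M := by
  split_ifs with h
  · subst h
    simpa [real_inner_self_eq_norm_sq, hD.norm_eq_one φ hφ] using hM
  · simpa using hD.abs_inner_le φ hφ ψ hψ h

theorem abs_inner_sum_sub_le [DecidableEq H] (hD : IsCoherentDictionary D M) (hM : 0 ≤ M)
    {S : Finset H} (hS : ↑S ⊆ D) (b : H → ℝ) {ψ₀ : H} (hψ₀ : ψ₀ ∈ D) :
    |⟪∑ ψ ∈ S, b ψ • ψ, ψ₀⟫ - if ψ₀ ∈ S then b ψ₀ else 0| ≤ M * ∑ ψ ∈ S, |b ψ| := by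
  have hexp : ⟪∑ ψ ∈ S, b ψ • ψ, ψ₀⟫ - (if ψ₀ ∈ S then b ψ₀ else 0)
      = ∑ ψ ∈ S, b ψ * (⟪ψ, ψ₀⟫ - if ψ = ψ₀ then 1 else 0) := by
    rw [← sum_ite_eq' S ψ₀ b, sum_inner, ← sum_sub_distrib]
    refine sum_congr rfl fun ψ _ => ?_
    rw [real_inner_smul_left]
    split_ifs <;> ring
  rw [hexp, mul_sum]
  refine (abs_sum_le_sum_abs _ _).trans (sum_le_sum fun ψ hψ => ?_)
  rw [abs_mul, mul_comm M]
  exact mul_le_mul_of_nonneg_left (hD.abs_inner_sub_ite_le hM (hS hψ) hψ₀) (abs_nonneg _)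

theorem abs_norm_sq_sum_sub_le (hD : IsCoherentDictionary D M) (hM : 0 ≤ M)
    {S : Finset H} (hS : ↑S ⊆ D) (b : H → ℝ) :
    |‖∑ ψ ∈ S, b ψ • ψ‖ ^ 2 - ∑ ψ ∈ S, b ψ ^ 2| ≤ M * (∑ ψ ∈ S, |b ψ|) ^ 2 := by
  classical
  set w := ∑ ψ ∈ S, b ψ • ψ
  have hexp : ‖w‖ ^ 2 - ∑ ψ ∈ S, b ψ ^ 2 = ∑ φ ∈ S, b φ * (⟪w, φ⟫ - b φ) := by
    rw [← real_inner_self_eq_norm_sq]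
    conv_lhs => enter [1, 2]; rw [show w = ∑ ψ ∈ S, b ψ • ψ from rfl]
    rw [inner_sum, ← sum_sub_distrib]
    refine sum_congr rfl fun φ _ => ?_
    rw [real_inner_smul_right]
    ring
  calc |‖w‖ ^ 2 - ∑ ψ ∈ S, b ψ ^ 2|
      ≤ ∑ φ ∈ S, |b φ| * (M * ∑ ψ ∈ S, |b ψ|) := by
        rw [hexp]
        refine (abs_sum_le_sum_abs _ _).trans (sum_le_sum fun φ hφ => ?_)
        have h := hD.abs_inner_sum_sub_le hM hS b (hS hφ)
        rw [if_pos hφ] at h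
        rw [abs_mul]
        exact mul_le_mul_of_nonneg_left h (abs_nonneg _)
    _ = M * (∑ ψ ∈ S, |b ψ|) ^ 2 := by rw [← sum_mul]; ring

theorem norm_sq_sum_le (hD : IsCoherentDictionary D M) (hM : 0 ≤ M)
    {S : Finset H} (hS : ↑S ⊆ D) (b : H → ℝ) :
    ‖∑ ψ ∈ S, b ψ • ψ‖ ^ 2 ≤ (1 + #S * M) * ∑ ψ ∈ S, b ψ ^ 2 := by
  have h := (abs_le.1 (hD.abs_norm_sq_sum_sub_le hM hS b)).2
  nlinarith [sq_sum_abs_le_card_mul_sum_sq S b]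

theorem mul_sum_sq_le_norm_sq (hD : IsCoherentDictionary D M) (hM : 0 ≤ M)
    {S : Finset H} (hS : ↑S ⊆ D) (b : H → ℝ) :
    (1 - #S * M) * ∑ ψ ∈ S, b ψ ^ 2 ≤ ‖∑ ψ ∈ S, b ψ • ψ‖ ^ 2 := by
  have h := (abs_le.1 (hD.abs_norm_sq_sum_sub_le hM hS b)).1
  nlinarith [sq_sum_abs_le_card_mul_sum_sq S b]

theorem sum_inner_sq_le (hD : IsCoherentDictionary D M) (hM : 0 ≤ M)
    {S : Finset H} (hS : ↑S ⊆ D) (u : H) :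
    ∑ ψ ∈ S, ⟪u, ψ⟫ ^ 2 ≤ (1 + #S * M) * ‖u‖ ^ 2 := by
  set B := ∑ ψ ∈ S, ⟪u, ψ⟫ ^ 2
  set v := ∑ ψ ∈ S, ⟪u, ψ⟫ • ψ
  have hB : 0 ≤ B := sum_nonneg fun ψ _ => sq_nonneg _
  have huv : ⟪u, v⟫ = B := by
    simp only [v, B, inner_sum, real_inner_smul_right, sq]
  have hv : ‖v‖ ^ 2 ≤ (1 + #S * M) * B := hD.norm_sq_sum_le hM hS _
  have hCS : B ^ 2 ≤ ‖u‖ ^ 2 * ‖v‖ ^ 2 := by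
    rw [← huv, ← mul_pow]
    have h := abs_real_inner_le_norm u v
    exact sq_le_sq' (neg_le_of_abs_le h) (le_of_abs_le h)
  rcases hB.eq_or_lt with h | h
  · rw [← h]; positivity
  · nlinarith [sq_nonneg ‖u‖]

theorem sum_sq_le_norm_sq (hD : IsCoherentDictionary D M) (hM : 0 ≤ M) {m : ℕ}
    (hmM : m * M ≤ 1 / 20) {S : Finset H} (hS : ↑S ⊆ D) (hSm : #S ≤ 3 * m) (b : H → ℝ) :
    17 * ∑ ψ ∈ S, b ψ ^ 2 ≤ 20 * ‖∑ ψ ∈ S, b ψ • ψ‖ ^ 2 := by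
  have hSM : (#S : ℝ) * M ≤ 3 / 20 := by
    have : (#S : ℝ) ≤ 3 * m := by exact_mod_cast hSm
    nlinarith
  nlinarith [hD.mul_sum_sq_le_norm_sq hM hS b, sum_nonneg fun ψ (_ : ψ ∈ S) => sq_nonneg (b ψ)]

-- `47/500` is a rational upper bound for `√(3/340)`.
theorem sqrt_mul_sum_abs_le (hD : IsCoherentDictionary D M) (hM : 0 ≤ M) {m : ℕ}
    (hmM : m * M ≤ 1 / 20) {S : Finset H} (hS : ↑S ⊆ D) (hSm : #S ≤ 3 * m) (b : H → ℝ) :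
    √m * (M * ∑ ψ ∈ S, |b ψ|) ≤ 47 / 500 * ‖∑ ψ ∈ S, b ψ • ψ‖ := by
  have hSm' : (#S : ℝ) ≤ 3 * m := by exact_mod_cast hSm
  have hl1 := sq_sum_abs_le_card_mul_sum_sq S b
  have hZ := hD.sum_sq_le_norm_sq hM hmM hS hSm b
  have hZ0 : 0 ≤ ∑ ψ ∈ S, b ψ ^ 2 := sum_nonneg fun ψ _ => sq_nonneg _
  have hmM0 : 0 ≤ (m : ℝ) * M := by positivity
  refine le_of_pow_le_pow_left₀ two_ne_zero (by positivity) ?_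
  calc (√m * (M * ∑ ψ ∈ S, |b ψ|)) ^ 2 = m * M ^ 2 * (∑ ψ ∈ S, |b ψ|) ^ 2 := by
        rw [mul_pow, mul_pow, Real.sq_sqrt (Nat.cast_nonneg m)]; ring
    _ ≤ m * M ^ 2 * (3 * m * ∑ ψ ∈ S, b ψ ^ 2) := by
        gcongr; exact hl1.trans (mul_le_mul_of_nonneg_right hSm' hZ0)
    _ = 3 * (m * M) ^ 2 * ∑ ψ ∈ S, b ψ ^ 2 := by ring
    _ ≤ 3 * (1 / 20) ^ 2 * ∑ ψ ∈ S, b ψ ^ 2 := by gcongr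
    _ ≤ (47 / 500 * ‖∑ ψ ∈ S, b ψ • ψ‖) ^ 2 := by nlinarith

theorem norm_sum_smul_le_of_abs_le (hD : IsCoherentDictionary D M)
    (hM : 0 ≤ M) {R : Finset H} (hR : ↑R ⊆ D) (hRM : #R * M ≤ 1 / 20) {a : H → ℝ} {u : H}
    {κ : ℝ} (ha : ∀ ψ ∈ R, |a ψ| ≤ κ + |⟪u, ψ⟫|) (hκ : 5 * #R * κ ^ 2 ≤ 2 * ‖u‖ ^ 2) :
    ‖∑ ψ ∈ R, a ψ • ψ‖ ≤ 7 / 4 * ‖u‖ := by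
  have hsum : ∑ ψ ∈ R, a ψ ^ 2 ≤ 2 * #R * κ ^ 2 + 2 * ∑ ψ ∈ R, ⟪u, ψ⟫ ^ 2 := by
    calc ∑ ψ ∈ R, a ψ ^ 2 ≤ ∑ ψ ∈ R, (2 * κ ^ 2 + 2 * ⟪u, ψ⟫ ^ 2) := by
          refine sum_le_sum fun ψ hψ => ?_
          have h := ha ψ hψ
          nlinarith [abs_nonneg (a ψ), sq_abs (a ψ), sq_abs ⟪u, ψ⟫, sq_nonneg (κ - |⟪u, ψ⟫|)]
      _ = 2 * #R * κ ^ 2 + 2 * ∑ ψ ∈ R, ⟪u, ψ⟫ ^ 2 := by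
          rw [sum_add_distrib, sum_const, nsmul_eq_mul, ← mul_sum]
          ring
  have hu := hD.sum_inner_sq_le hM hR u
  have hnorm := hD.norm_sq_sum_le hM hR a
  refine le_of_pow_le_pow_left₀ two_ne_zero (by positivity) ?_
  nlinarith [sum_nonneg fun ψ (_ : ψ ∈ R) => sq_nonneg (a ψ), sq_nonneg ‖u‖]

end IsCoherentDictionary

end

section

variable {H : Type*} [DecidableEq H]

def greedyAtoms (g : ℕ → H) (n : ℕ) : Finset H := (range n).image fun k => g (k + 1)

theorem coe_greedyAtoms (g : ℕ → H) (n : ℕ) : ↑(greedyAtoms g n) = g '' Set.Icc 1 n := by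
  ext ψ
  simp only [greedyAtoms, coe_image, coe_range, Set.mem_image, Set.mem_Iio, Set.mem_Icc]
  constructor
  · rintro ⟨k, hk, rfl⟩
    exact ⟨k + 1, ⟨by omega, by omega⟩, rfl⟩
  · rintro ⟨k, ⟨hk1, hkn⟩, rfl⟩
    exact ⟨k - 1, by omega, by rw [Nat.sub_add_cancel hk1]⟩

theorem greedyAtoms_mono {g : ℕ → H} {n n' : ℕ} (h : n ≤ n') :
    greedyAtoms g n ⊆ greedyAtoms g n' :=
  image_subset_image (range_subset_range.2 h)

theorem card_greedyAtoms_le (g : ℕ → H) (n : ℕ) : #(greedyAtoms g n) ≤ n :=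
  card_image_le.trans (card_range n).le

theorem card_add_card_sdiff_greedyAtoms_le {g : ℕ → H} {N : ℕ}
    (hinj : Set.InjOn (fun k => g (k + 1)) ↑(range N)) (T : Finset H) :
    N + #(T \ greedyAtoms g N) ≤ #T + #{n ∈ range N | g (n + 1) ∉ T} := by
  have hin : #{n ∈ range N | g (n + 1) ∈ T} ≤ #(T ∩ greedyAtoms g N) := by
    refine card_le_card_of_injOn _ (fun n hn => ?_) (hinj.mono (coe_subset.2 (filter_subset _ _)))
    simp only [coe_filter, Set.mem_ofPred_eq, mem_range] at hn
    exact mem_coe.2 (mem_inter.2 ⟨hn.2, mem_image_of_mem _ (mem_range.2 hn.1)⟩)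
  have hsplit := card_filter_add_card_filter_not (s := range N) fun n => g (n + 1) ∈ T
  have hT := card_inter_add_card_sdiff T (greedyAtoms g N)
  rw [card_range] at hsplit
  omega

end

section

variable {H : Type*} [NormedAddCommGroup H] [InnerProductSpace ℝ H]

/-- The first `N` steps of the OGA on `f`: `r k` is the residual `f_k` and `g k` the atom selected
at step `k`. -/
structure IsOGARun (D : Set H) (f : H) (r g : ℕ → H) (N : ℕ) : Prop where
  mem : ∀ k, 1 ≤ k → k ≤ N → g k ∈ D
  greedy : ∀ k, k < N → ∀ φ ∈ D, |⟪r k, φ⟫| ≤ |⟪r k, g (k + 1)⟫|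
  sub_mem_span : ∀ k, k ≤ N → f - r k ∈ Submodule.span ℝ (g '' Set.Icc 1 k)
  inner_eq_zero : ∀ k, k ≤ N → ∀ i, 1 ≤ i → i ≤ k → ⟪r k, g i⟫ = 0

variable [DecidableEq H]

namespace IsOGARun

variable {D : Set H} {f : H} {r g : ℕ → H} {N n : ℕ}

theorem greedyAtoms_subset (hrun : IsOGARun D f r g N) (hn : n ≤ N) :
    ↑(greedyAtoms g n) ⊆ D := by
  rw [coe_greedyAtoms]
  rintro _ ⟨k, ⟨hk1, hkn⟩, rfl⟩
  exact hrun.mem k hk1 (hkn.trans hn)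

theorem sub_mem_span_greedyAtoms (hrun : IsOGARun D f r g N) (hn : n ≤ N) :
    f - r n ∈ Submodule.span ℝ ↑(greedyAtoms g n) := by
  rw [coe_greedyAtoms]
  exact hrun.sub_mem_span n hn

theorem inner_eq_zero_of_mem_span (hrun : IsOGARun D f r g N) (hn : n ≤ N) {w : H}
    (hw : w ∈ Submodule.span ℝ ↑(greedyAtoms g n)) : ⟪r n, w⟫ = 0 := by
  have hker : ↑(greedyAtoms g n) ⊆ (LinearMap.ker (innerₛₗ ℝ (r n)) : Set H) := by
    rw [coe_greedyAtoms]
    rintro _ ⟨k, ⟨hk1, hkn⟩, rfl⟩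
    simpa using hrun.inner_eq_zero n hn k hk1 hkn
  simpa using Submodule.span_le.2 hker hw

theorem norm_le_norm_sub (hrun : IsOGARun D f r g N) (hn : n ≤ N) {w : H}
    (hw : w ∈ Submodule.span ℝ ↑(greedyAtoms g n)) : ‖r n‖ ≤ ‖f - w‖ := by
  have horth : ⟪r n, f - r n - w⟫ = 0 :=
    hrun.inner_eq_zero_of_mem_span hn (sub_mem (hrun.sub_mem_span_greedyAtoms hn) hw)
  have hpy := norm_add_sq_eq_norm_sq_add_norm_sq_real horth
  rw [show r n + (f - r n - w) = f - w by abel] at hpy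
  nlinarith [norm_nonneg (r n), norm_nonneg (f - w), mul_self_nonneg ‖f - r n - w‖]

theorem norm_le_of_le (hrun : IsOGARun D f r g N) (hn : n ≤ N) : ‖r N‖ ≤ ‖r n‖ := by
  simpa using hrun.norm_le_norm_sub le_rfl
    (Submodule.span_mono (greedyAtoms_mono hn) (hrun.sub_mem_span_greedyAtoms hn))

theorem injOn (hrun : IsOGARun D f r g N) (hne : ∀ n < N, ⟪r n, g (n + 1)⟫ ≠ 0) :
    Set.InjOn (fun k => g (k + 1)) ↑(range N) := by
  have hnew : ∀ k l, k < l → l < N → g (k + 1) ≠ g (l + 1) := fun k l hkl hl heq =>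
    hne l hl (hrun.inner_eq_zero_of_mem_span hl.le
      (Submodule.subset_span (heq ▸ mem_image_of_mem _ (mem_range.2 hkl))))
  intro k hk l hl heq
  simp only [coe_range, Set.mem_Iio] at hk hl
  rcases lt_trichotomy k l with h | h | h
  exacts [absurd heq (hnew k l h hl), h, absurd heq.symm (hnew l k h hk)]

variable {T : Finset H} {a : H → ℝ} {u : H}

theorem norm_sq_le (hrun : IsOGARun D f r g N) (hT : ↑T ⊆ D) (hf : f = ∑ ψ ∈ T, a ψ • ψ + u)
    (hn : n < N) :
    ‖r n‖ ^ 2 ≤ (∑ ψ ∈ T \ greedyAtoms g n, |a ψ|) * |⟪r n, g (n + 1)⟫| + ‖u‖ * ‖r n‖ := by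
  have hself : ⟪r n, f⟫ = ‖r n‖ ^ 2 := by
    have h := hrun.inner_eq_zero_of_mem_span hn.le (hrun.sub_mem_span_greedyAtoms hn.le)
    rw [inner_sub_right, real_inner_self_eq_norm_sq] at h
    linarith
  have hsum : ⟪r n, ∑ ψ ∈ T, a ψ • ψ⟫ = ∑ ψ ∈ T \ greedyAtoms g n, a ψ * ⟪r n, ψ⟫ := by
    simp only [inner_sum, real_inner_smul_right]
    refine (sum_subset sdiff_subset fun ψ hψT hψ => ?_).symm
    have hψΓ : ψ ∈ greedyAtoms g n := by simpa [hψT] using hψ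
    rw [hrun.inner_eq_zero_of_mem_span hn.le (Submodule.subset_span hψΓ), mul_zero]
  rw [← hself, hf, inner_add_right, hsum, sum_mul]
  refine add_le_add (sum_le_sum fun ψ hψ => ?_) ?_
  · calc a ψ * ⟪r n, ψ⟫ ≤ |a ψ| * |⟪r n, ψ⟫| := by rw [← abs_mul]; exact le_abs_self _
      _ ≤ |a ψ| * |⟪r n, g (n + 1)⟫| :=
        mul_le_mul_of_nonneg_left (hrun.greedy n hn ψ (hT (mem_sdiff.1 hψ).1)) (abs_nonneg _)
  · rw [mul_comm]
    exact real_inner_le_norm _ _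

theorem inner_ne_zero (hrun : IsOGARun D f r g N) (hT : ↑T ⊆ D) (hf : f = ∑ ψ ∈ T, a ψ • ψ + u)
    (hn : n < N) (hu : ‖u‖ < ‖r n‖) : ⟪r n, g (n + 1)⟫ ≠ 0 := by
  intro h0
  have h := hrun.norm_sq_le hT hf hn
  rw [h0, abs_zero, mul_zero, zero_add] at h
  nlinarith [norm_nonneg u]

theorem norm_le_add_norm_sum_sdiff (hrun : IsOGARun D f r g N) (hf : f = ∑ ψ ∈ T, a ψ • ψ + u) :
    ‖r N‖ ≤ ‖u‖ + ‖∑ ψ ∈ T \ greedyAtoms g N, a ψ • ψ‖ := by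
  have hmem : ∑ ψ ∈ T ∩ greedyAtoms g N, a ψ • ψ ∈ Submodule.span ℝ ↑(greedyAtoms g N) :=
    Submodule.sum_mem _ fun ψ hψ =>
      Submodule.smul_mem _ _ (Submodule.subset_span (mem_inter.1 hψ).2)
  have hsplit : f - ∑ ψ ∈ T ∩ greedyAtoms g N, a ψ • ψ
      = u + ∑ ψ ∈ T \ greedyAtoms g N, a ψ • ψ := by
    rw [hf, ← sum_sdiff (inter_subset_left : T ∩ greedyAtoms g N ⊆ T), sdiff_inter_self_left]
    abel
  calc ‖r N‖ ≤ ‖f - ∑ ψ ∈ T ∩ greedyAtoms g N, a ψ • ψ‖ := hrun.norm_le_norm_sub le_rfl hmem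
    _ ≤ _ := hsplit ▸ norm_add_le _ _

theorem exists_sub_eq_sum_union (hrun : IsOGARun D f r g N) (hf : f = ∑ ψ ∈ T, a ψ • ψ + u)
    (hn : n ≤ N) : ∃ b : H → ℝ, r n - u = ∑ ψ ∈ T ∪ greedyAtoms g n, b ψ • ψ ∧
      ∀ ψ ∈ T \ greedyAtoms g n, b ψ = a ψ := by
  obtain ⟨p, -, hp⟩ := Submodule.mem_span_finset.1 (hrun.sub_mem_span_greedyAtoms hn)
  refine ⟨fun ψ => (if ψ ∈ T then a ψ else 0) - if ψ ∈ greedyAtoms g n then p ψ else 0, ?_,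
    fun ψ hψ => by simp [(mem_sdiff.1 hψ).1, (mem_sdiff.1 hψ).2]⟩
  rw [← sum_smul_sub_sum_smul_eq_sum_union, hp, hf]
  abel

theorem sum_inner_sq_le {M : ℝ} (hD : IsCoherentDictionary D M) (hM : 0 ≤ M)
    (hrun : IsOGARun D f r g N) (hinj : Set.InjOn (fun k => g (k + 1)) ↑(range N))
    {s : Finset ℕ} (hs : s ⊆ range N) (u : H) :
    ∑ k ∈ s, ⟪u, g (k + 1)⟫ ^ 2 ≤ (1 + #s * M) * ‖u‖ ^ 2 := by
  rw [← sum_image (f := fun ψ => ⟪u, ψ⟫ ^ 2) (hinj.mono (coe_subset.2 hs))]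
  refine (hD.sum_inner_sq_le hM (fun ψ hψ => ?_) u).trans ?_
  · obtain ⟨k, hk, rfl⟩ := mem_image.1 hψ
    exact hrun.mem (k + 1) (by omega) (mem_range.1 (hs hk))
  · gcongr
    exact card_image_le

variable {M : ℝ} {m : ℕ}

/-- `r n - u` is a combination of the at most `3m` atoms of `T` and of the selected ones, so by
coherence its inner product with an atom is that atom's coefficient up to `E = M ∑ |b ψ|`. -/
theorem exists_coeff_bound_of_notMem (hD : IsCoherentDictionary D M) (hM : 0 ≤ M)
    (hmM : m * M ≤ 1 / 20) (hrun : IsOGARun D f r g (2 * m)) (hT : ↑T ⊆ D) (hTm : #T ≤ m)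
    (hf : f = ∑ ψ ∈ T, a ψ • ψ + u) (hn : n < 2 * m) (hgT : g (n + 1) ∉ T) :
    ∃ E, 0 ≤ E ∧ √m * E ≤ 47 / 500 * (‖r n‖ + ‖u‖) ∧ |⟪r n, g (n + 1)⟫| ≤ E + |⟪u, g (n + 1)⟫| ∧
      (∀ ψ ∈ T \ greedyAtoms g n, |a ψ| ≤ 2 * E + |⟪u, g (n + 1)⟫| + |⟪u, ψ⟫|) ∧
      17 * ∑ ψ ∈ T \ greedyAtoms g n, a ψ ^ 2 ≤ 20 * (‖r n‖ + ‖u‖) ^ 2 := by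
  obtain ⟨b, hw, hba⟩ := hrun.exists_sub_eq_sum_union hf hn.le
  set Γ := greedyAtoms g n
  have hS : ↑(T ∪ Γ) ⊆ D := by
    rw [coe_union]
    exact Set.union_subset hT (hrun.greedyAtoms_subset hn.le)
  have hSm : #(T ∪ Γ) ≤ 3 * m :=
    (card_union_le _ _).trans (by have : #Γ ≤ n := card_greedyAtoms_le g n; omega)
  have hwn : ‖r n - u‖ ≤ ‖r n‖ + ‖u‖ := norm_sub_le _ _
  set E := M * ∑ ψ ∈ T ∪ Γ, |b ψ|
  have hE : 0 ≤ E := mul_nonneg hM (sum_nonneg fun ψ _ => abs_nonneg _)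
  have hcross : ∀ ψ ∈ D, |⟪r n, ψ⟫ - ⟪u, ψ⟫ - if ψ ∈ T ∪ Γ then b ψ else 0| ≤ E := fun ψ hψ => by
    simpa only [← inner_sub_left, hw] using hD.abs_inner_sum_sub_le hM hS b hψ
  have hG : |⟪r n, g (n + 1)⟫| ≤ E + |⟪u, g (n + 1)⟫| := by
    by_cases hgΓ : g (n + 1) ∈ Γ
    · rw [hrun.inner_eq_zero_of_mem_span hn.le (Submodule.subset_span hgΓ), abs_zero]
      positivity
    · have h := hcross _ (hrun.mem (n + 1) (by omega) (by omega))
      rw [if_neg (by simp [hgT, hgΓ]), sub_zero] at h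
      linarith [abs_sub_abs_le_abs_sub ⟪r n, g (n + 1)⟫ ⟪u, g (n + 1)⟫]
  refine ⟨E, hE, ?_, hG, fun ψ hψ => ?_, ?_⟩
  · exact (hD.sqrt_mul_sum_abs_le hM hmM hS hSm b).trans (by rw [← hw]; gcongr)
  · obtain ⟨hψT, -⟩ := mem_sdiff.1 hψ
    have h := hcross ψ (hT hψT)
    rw [if_pos (mem_union_left _ hψT), hba ψ hψ] at h
    have hgreedy := hrun.greedy n hn ψ (hT hψT)
    rw [abs_le] at h ⊢
    constructor <;> linarith [abs_le.1 (hgreedy.trans hG), le_abs_self ⟪u, ψ⟫, neg_abs_le ⟪u, ψ⟫]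
  · calc 17 * ∑ ψ ∈ T \ Γ, a ψ ^ 2 = 17 * ∑ ψ ∈ T \ Γ, b ψ ^ 2 := by
          rw [sum_congr rfl fun ψ hψ => by rw [← hba ψ hψ]]
      _ ≤ 17 * ∑ ψ ∈ T ∪ Γ, b ψ ^ 2 := by
          gcongr
          exact sdiff_subset.trans subset_union_left
      _ ≤ 20 * ‖r n - u‖ ^ 2 := hw ▸ hD.sum_sq_le_norm_sq hM hmM hS hSm b
      _ ≤ 20 * (‖r n‖ + ‖u‖) ^ 2 := by gcongr

theorem norm_mul_sub_norm_le_of_notMem (hD : IsCoherentDictionary D M) (hM : 0 ≤ M)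
    (hmM : m * M ≤ 1 / 20) (hrun : IsOGARun D f r g (2 * m)) (hT : ↑T ⊆ D) (hTm : #T ≤ m)
    (hf : f = ∑ ψ ∈ T, a ψ • ψ + u) (hn : n < 2 * m) (hgT : g (n + 1) ∉ T) :
    23 / 25 * (‖r n‖ * (‖r n‖ - ‖u‖))
      ≤ (√m * |⟪u, g (n + 1)⟫| + 47 / 500 * (‖r n‖ + ‖u‖)) * (‖r n‖ + ‖u‖) := by
  obtain ⟨E, -, hE, hG, -, hZ⟩ := hrun.exists_coeff_bound_of_notMem hD hM hmM hT hTm hf hn hgT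
  have hcard : (#(T \ greedyAtoms g n) : ℝ) ≤ m := by
    exact_mod_cast (card_le_card sdiff_subset).trans hTm
  have hL := (sq_sum_abs_le_card_mul_sum_sq (T \ greedyAtoms g n) a).trans
    (mul_le_mul_of_nonneg_right hcard (sum_nonneg fun ψ _ => sq_nonneg (a ψ)))
  refine mul_sub_le_of_le_mul_add (norm_nonneg _) (norm_nonneg _) (Real.sqrt_nonneg _)
    (sum_nonneg fun ψ _ => abs_nonneg _) (abs_nonneg _) (hrun.norm_sq_le hT hf hn) ?_ hG hE
  rw [Real.sq_sqrt (Nat.cast_nonneg _)]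
  nlinarith

theorem norm_le_of_weak_step (hD : IsCoherentDictionary D M) (hM : 0 ≤ M)
    (hmM : m * M ≤ 1 / 20) (hrun : IsOGARun D f r g (2 * m)) (hT : ↑T ⊆ D) (hTm : #T ≤ m)
    (hf : f = ∑ ψ ∈ T, a ψ • ψ + u) {k : ℕ} (hk : k < 2 * m) (hgT : g (k + 1) ∉ T)
    (hWk : m * ⟪u, g (k + 1)⟫ ^ 2 ≤ 11 / 10 * ‖u‖ ^ 2)
    (hR : 10 * #(T \ greedyAtoms g (2 * m)) < m) : ‖r (2 * m)‖ ≤ 11 / 4 * ‖u‖ := by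
  set R := T \ greedyAtoms g (2 * m)
  have hWk' : √m * |⟪u, g (k + 1)⟫| ≤ 21 / 20 * ‖u‖ := by
    refine le_of_pow_le_pow_left₀ two_ne_zero (by positivity) ?_
    rw [mul_pow, Real.sq_sqrt (Nat.cast_nonneg _), sq_abs]
    nlinarith [sq_nonneg ‖u‖]
  have hxk : ‖r k‖ ≤ 4 * ‖u‖ := by
    have h := hrun.norm_mul_sub_norm_le_of_notMem hD hM hmM hT hTm hf hk hgT
    nlinarith [norm_nonneg u, norm_nonneg (r k)]
  obtain ⟨E, hE0, hE, -, ha, -⟩ := hrun.exists_coeff_bound_of_notMem hD hM hmM hT hTm hf hk hgT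
  have hκ : 5 * #R * (2 * E + |⟪u, g (k + 1)⟫|) ^ 2 ≤ 2 * ‖u‖ ^ 2 := by
    have h : √m * (2 * E + |⟪u, g (k + 1)⟫|) ≤ 2 * ‖u‖ := by
      rw [mul_add, mul_left_comm]
      linarith [norm_nonneg u]
    have h2 := pow_le_pow_left₀ (by positivity) h 2
    rw [mul_pow, Real.sq_sqrt (Nat.cast_nonneg _)] at h2
    have hR' : 10 * (#R : ℝ) < m := by exact_mod_cast hR
    nlinarith [sq_nonneg (2 * E + |⟪u, g (k + 1)⟫|)]
  have hRM : (#R : ℝ) * M ≤ 1 / 20 := by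
    have hR' : 10 * (#R : ℝ) ≤ m := by exact_mod_cast hR.le
    nlinarith
  have hRk : R ⊆ T \ greedyAtoms g k := sdiff_subset_sdiff subset_rfl (greedyAtoms_mono hk.le)
  have htail := hD.norm_sum_smul_le_of_abs_le hM ((coe_subset.2 sdiff_subset).trans hT) hRM
    (fun ψ hψ => (ha ψ (hRk hψ)).trans_eq (by ring)) hκ
  linarith [hrun.norm_le_add_norm_sum_sdiff hf]

theorem norm_le_three_mul (hD : IsCoherentDictionary D M) (hM : 0 ≤ M) (hmM : m * M ≤ 1 / 20)
    (hm : 1 ≤ m) (hrun : IsOGARun D f r g (2 * m)) (hT : ↑T ⊆ D) (hTm : #T ≤ m)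
    (hf : f = ∑ ψ ∈ T, a ψ • ψ + u) : ‖r (2 * m)‖ ≤ 3 * ‖u‖ := by
  by_contra! hX
  have hx : ∀ n ≤ 2 * m, 3 * ‖u‖ < ‖r n‖ := fun n hn => hX.trans_le (hrun.norm_le_of_le hn)
  have hinj := hrun.injOn fun n hn =>
    hrun.inner_ne_zero hT hf hn (by linarith [hx n hn.le, norm_nonneg u])
  have hcard := card_add_card_sdiff_greedyAtoms_le hinj T
  set bad := {n ∈ range (2 * m) | g (n + 1) ∉ T}
  replace hcard : m + #(T \ greedyAtoms g (2 * m)) ≤ #bad := by omega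
  have hbad : ∀ n ∈ bad, n < 2 * m ∧ g (n + 1) ∉ T := fun n hn => by simpa [bad] using hn
  have hlow : ∀ n ∈ bad, ‖u‖ ^ 2 < m * ⟪u, g (n + 1)⟫ ^ 2 := fun n hn => by
    obtain ⟨hn, hgT⟩ := hbad n hn
    have h := hrun.norm_mul_sub_norm_le_of_notMem hD hM hmM hT hTm hf hn hgT
    have hxn := hx n hn.le
    have hlt : ‖u‖ < √m * |⟪u, g (n + 1)⟫| := by nlinarith [norm_nonneg u]
    simpa [mul_pow, Real.sq_sqrt (Nat.cast_nonneg m)] using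
      pow_lt_pow_left₀ hlt (norm_nonneg u) two_ne_zero
  have hbessel : ∑ n ∈ bad, ⟪u, g (n + 1)⟫ ^ 2 ≤ 11 / 10 * ‖u‖ ^ 2 := by
    refine (hrun.sum_inner_sq_le hD hM hinj (filter_subset _ _) u).trans ?_
    have : (#bad : ℝ) ≤ 2 * m := by exact_mod_cast (card_filter_le _ _).trans (card_range _).le
    nlinarith [sq_nonneg ‖u‖, mul_le_mul_of_nonneg_right this hM]
  obtain ⟨hR, k, hk, hWk⟩ :=
    card_lt_and_exists_mul_le_of_sum_le hm (sq_nonneg ‖u‖) hcard hlow hbessel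
  obtain ⟨hk2m, hgT⟩ := hbad k hk
  linarith [hrun.norm_le_of_weak_step hD hM hmM hT hTm hf hk2m hgT hWk hR, norm_nonneg u]

end IsOGARun

end

theorem oga_lebesgue_inequality_general {H : Type*} [NormedAddCommGroup H] [InnerProductSpace ℝ H]
    (D : Set H) (M : ℝ)
    (hDnorm : ∀ φ ∈ D, ‖φ‖ = 1)
    (hcoh : ∀ φ ∈ D, ∀ ψ ∈ D, φ ≠ ψ → |⟪φ, ψ⟫| ≤ M)
    (m : ℕ) (hm : 1 ≤ m) (hmM : (m : ℝ) * M ≤ 1 / 20)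
    (f : H) (fres : ℕ → H) (g : ℕ → H)
    (hgD : ∀ k, 1 ≤ k → k ≤ 2 * m → g k ∈ D)
    (hgreedy : ∀ k, k < 2 * m → ∀ φ ∈ D, |⟪fres k, φ⟫| ≤ |⟪fres k, g (k + 1)⟫|)
    (hres_span : ∀ k, k ≤ 2 * m → f - fres k ∈ Submodule.span ℝ (g '' Set.Icc 1 k))
    (hres_orth : ∀ k, k ≤ 2 * m → ∀ i, 1 ≤ i → i ≤ k → ⟪fres k, g i⟫ = 0) :
    ‖fres (2 * m)‖ ≤ 3 *
      sInf {r : ℝ | ∃ (c : Fin m → ℝ) (φ : Fin m → H),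
        (∀ i, φ i ∈ D) ∧ r = ‖f - ∑ i, c i • φ i‖} := by
  classical
  -- `M` may be negative when `D` is a singleton
  have hD : IsCoherentDictionary D (max M 0) :=
    (IsCoherentDictionary.mk hDnorm hcoh).mono (le_max_left _ _)
  have hmM' : (m : ℝ) * max M 0 ≤ 1 / 20 := by
    rw [mul_max_of_nonneg _ _ (Nat.cast_nonneg m), mul_zero]
    exact max_le hmM (by norm_num)
  have hrun : IsOGARun D f fres g (2 * m) := ⟨hgD, hgreedy, hres_span, hres_orth⟩
  have hg1 : g 1 ∈ D := hgD 1 le_rfl (by omega)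
  rw [← div_le_iff₀' (by norm_num : (0 : ℝ) < 3)]
  refine le_csInf ⟨_, fun _ => 0, fun _ => g 1, fun _ => hg1, rfl⟩ ?_
  rintro _ ⟨c, φ, hφ, rfl⟩
  obtain ⟨T, hT, hTm, a, ha⟩ := exists_finset_sum_smul_eq c φ hφ
  have hf : f = ∑ ψ ∈ T, a ψ • ψ + (f - ∑ i, c i • φ i) := by rw [ha]; abel
  rw [div_le_iff₀' (by norm_num : (0 : ℝ) < 3)]
  exact hrun.norm_le_three_mul hD (le_max_right _ _) hmM' hm hT (by simpa using hTm) hf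

/-- Main theorem: for an `M`-coherent dictionary `D` and `1 ≤ m ≤ 1/(20M)` (i.e. `mM ≤ 1/20`),
the residual of the Orthogonal Greedy Algorithm after `2m` steps satisfies
`‖f - G^{OGA}_{2m}(f, D)‖ = ‖f_{2m}‖ ≤ 3 σₘ(f, D)`. -/
theorem oga_lebesgue_inequality {H : Type*} [NormedAddCommGroup H] [InnerProductSpace ℝ H]
    [CompleteSpace H]
    (D : Set H) (M : ℝ)
    (hDnorm : ∀ φ ∈ D, ‖φ‖ = 1)
    (hDdense : Dense (Submodule.span ℝ D : Set H))
    (hcoh : ∀ φ ∈ D, ∀ ψ ∈ D, φ ≠ ψ → |⟪φ, ψ⟫| ≤ M)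
    (m : ℕ) (hm : 1 ≤ m) (hmM : (m : ℝ) * M ≤ 1 / 20)
    (f : H) (fres : ℕ → H) (g : ℕ → H)
    (hf0 : fres 0 = f)
    (hgD : ∀ k, 1 ≤ k → k ≤ 2 * m → g k ∈ D)
    (hgreedy : ∀ k, k < 2 * m → ∀ φ ∈ D, |⟪fres k, φ⟫| ≤ |⟪fres k, g (k + 1)⟫|)
    (hres_span : ∀ k, k ≤ 2 * m → f - fres k ∈ Submodule.span ℝ (g '' Set.Icc 1 k))
    (hres_orth : ∀ k, k ≤ 2 * m → ∀ i, 1 ≤ i → i ≤ k → ⟪fres k, g i⟫ = 0) :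
    ‖fres (2 * m)‖ ≤ 3 *
      sInf {r : ℝ | ∃ (c : Fin m → ℝ) (φ : Fin m → H),
        (∀ i, φ i ∈ D) ∧ r = ‖f - ∑ i, c i • φ i‖} :=
  oga_lebesgue_inequality_general D M hDnorm hcoh m hm hmM f fres g hgD hgreedy hres_span hres_orth
end

section
/- Let v_0, v_1, …, v_{2m} be nonnegative reals (squared norms) and let T_1, T_2 partition {1,…,2m} with |T_1| ≤ m. Suppose v_n² ≤ v_{n−1}² + 0.3 D M for n ∈ T_1 and v_n² ≤ v_{n−1}² − 0.6 d_n² for n ∈ T_2, where D = Σ_{n∈T_2} d_n², and mM ≤ 1/20, v_0 ≤ 1.01 σ. Then D ≤ (1.01 σ)²/0.58, i.e. D^{1/2} ≤ 1.33 σ. -/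
/-!
Summing the recursive inequalities telescopes: `v_{2m}² - v₀²` is at most
`|T₁| · 0.3 D M - 0.6 D ≤ 0.015 D - 0.6 D`, using `|T₁| M ≤ m M ≤ 1/20`.
Since `v_{2m}² ≥ 0`, this gives `0.585 D ≤ v₀² ≤ (1.01 σ)²`, and
`(1.01)² / 0.58 < (1.33)²` turns it into the bound on `√D`.
-/

open Finset

theorem Finset.sum_Icc_one_sub_pred {G : Type*} [AddCommGroup G] (f : ℕ → G) (N : ℕ) :
    ∑ n ∈ Icc 1 N, (f n - f (n - 1)) = f N - f 0 := by
  induction N with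
  | zero => simp
  | succ N ih =>
    rw [sum_Icc_succ_top (by omega), ih, Nat.add_sub_cancel]
    abel

theorem sub_le_sum_add_sum_of_partition {G : Type*} [AddCommGroup G] [PartialOrder G]
    [IsOrderedAddMonoid G] {f a b : ℕ → G} {N : ℕ} {T₁ T₂ : Finset ℕ}
    (hunion : T₁ ∪ T₂ = Icc 1 N) (hdisj : Disjoint T₁ T₂)
    (h₁ : ∀ n ∈ T₁, f n - f (n - 1) ≤ a n) (h₂ : ∀ n ∈ T₂, f n - f (n - 1) ≤ b n) :
    f N - f 0 ≤ ∑ n ∈ T₁, a n + ∑ n ∈ T₂, b n := by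
  rw [← sum_Icc_one_sub_pred, ← hunion, sum_union hdisj]
  exact add_le_add (sum_le_sum h₁) (sum_le_sum h₂)

theorem numeric_D_bound_general (m : ℕ) (M : ℝ) (hM : 0 ≤ M)
    (hmM : (m : ℝ) * M ≤ 1 / 20)
    (σ : ℝ)
    (v : ℕ → ℝ) (hv : ∀ n ≤ 2 * m, 0 ≤ v n)
    (T₁ T₂ : Finset ℕ) (hunion : T₁ ∪ T₂ = Finset.Icc 1 (2 * m))
    (hdisj : Disjoint T₁ T₂) (hT₁ : T₁.card ≤ m)
    (d : ℕ → ℝ) (Dv : ℝ) (hD : Dv = ∑ n ∈ T₂, (d n) ^ 2)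
    (hv0 : v 0 ≤ 1.01 * σ)
    (hrec₁ : ∀ n ∈ T₁, (v n) ^ 2 ≤ (v (n - 1)) ^ 2 + 0.3 * Dv * M)
    (hrec₂ : ∀ n ∈ T₂, (v n) ^ 2 ≤ (v (n - 1)) ^ 2 - 0.6 * (d n) ^ 2) :
    0.58 * Dv ≤ (1.01 * σ) ^ 2 ∧ Real.sqrt Dv ≤ 1.33 * σ := by
  have hDv : 0 ≤ Dv := hD ▸ sum_nonneg fun n _ => sq_nonneg (d n)
  have htel := sub_le_sum_add_sum_of_partition (f := fun n => v n ^ 2)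
    (a := fun _ => 0.3 * Dv * M) (b := fun n => -(0.6 * d n ^ 2)) hunion hdisj
    (fun n hn => by linarith [hrec₁ n hn]) (fun n hn => by linarith [hrec₂ n hn])
  simp only [sum_const, nsmul_eq_mul, sum_neg_distrib, ← mul_sum, ← hD] at htel
  have hT₁M : (T₁.card : ℝ) * M ≤ 1 / 20 :=
    (mul_le_mul_of_nonneg_right (by exact_mod_cast hT₁) hM).trans hmM
  have hv₀ : 0 ≤ v 0 := hv 0 (Nat.zero_le _)
  have hv₀sq : v 0 ^ 2 ≤ (1.01 * σ) ^ 2 := pow_le_pow_left₀ hv₀ hv0 2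
  have hmain : 0.58 * Dv ≤ (1.01 * σ) ^ 2 := by
    nlinarith [sq_nonneg (v (2 * m)), mul_le_mul_of_nonneg_left hT₁M hDv]
  refine ⟨hmain, Real.sqrt_le_iff.2 ⟨by linarith, by nlinarith⟩⟩

/-- If `v₀,…,v_{2m} ≥ 0`, `T₁ ∪ T₂` partitions `{1,…,2m}` with `|T₁| ≤ m`,
`vₙ² ≤ v_{n-1}² + 0.3 D M` for `n ∈ T₁`, `vₙ² ≤ v_{n-1}² - 0.6 dₙ²` for `n ∈ T₂`
(where `D = ∑_{n∈T₂} dₙ²`), `mM ≤ 1/20` and `v₀ ≤ 1.01 σ`, then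
`0.58 D ≤ (1.01 σ)²`, hence `√D ≤ 1.33 σ`. -/
theorem numeric_D_bound (m : ℕ) (M : ℝ) (hm : 1 ≤ m) (hM : 0 ≤ M)
    (hmM : (m : ℝ) * M ≤ 1 / 20)
    (σ : ℝ) (hσ : 0 ≤ σ)
    (v : ℕ → ℝ) (hv : ∀ n ≤ 2 * m, 0 ≤ v n)
    (T₁ T₂ : Finset ℕ) (hunion : T₁ ∪ T₂ = Finset.Icc 1 (2 * m))
    (hdisj : Disjoint T₁ T₂) (hT₁ : T₁.card ≤ m)
    (d : ℕ → ℝ) (Dv : ℝ) (hD : Dv = ∑ n ∈ T₂, (d n) ^ 2)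
    (hv0 : v 0 ≤ 1.01 * σ)
    (hrec₁ : ∀ n ∈ T₁, (v n) ^ 2 ≤ (v (n - 1)) ^ 2 + 0.3 * Dv * M)
    (hrec₂ : ∀ n ∈ T₂, (v n) ^ 2 ≤ (v (n - 1)) ^ 2 - 0.6 * (d n) ^ 2) :
    0.58 * Dv ≤ (1.01 * σ) ^ 2 ∧ Real.sqrt Dv ≤ 1.33 * σ :=
  numeric_D_bound_general m M hM hmM σ v hv T₁ T₂ hunion hdisj hT₁ d Dv hD hv0 hrec₁ hrec₂
end
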